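/- Let X be a δ-hyperbolic geodesic metric space and U a closed K-quasiconvex subset. Let x, y ∈ X and α a k-quasi-geodesic joining x and y. If P: X → U is a nearest point projection map, then the Hausdorff distance between P(α) and any geodesic [P(x), P(y)] is bounded by a constant D = D(δ, K, k) depending only on δ, K, k. -/

import Mathlib

open Metric Set

/-- A geodesic from `a` to `b` in a metric space, parametrized by arc length
on the interval `[0, dist a b]`. -/
def IsGeodesicFrom {X : Type*} [MetricSpace X] (γ : ℝ → X) (a b : X) : Prop :=
  γ 0 = a ∧ γ (dist a b) = b ∧
    ∀ s ∈ Set.Icc (0 : ℝ) (dist a b), ∀ t ∈ Set.Icc (0 : ℝ) (dist a b),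
      dist (γ s) (γ t) = |s - t|

/-- A geodesic metric space: any two points are joined by a geodesic. -/
def GeodesicMetricSpace (X : Type*) [MetricSpace X] : Prop :=
  ∀ a b : X, ∃ γ : ℝ → X, IsGeodesicFrom γ a b

/-- The image of a geodesic segment from `a` to `b`. -/
def geodImage {X : Type*} [MetricSpace X] (γ : ℝ → X) (a b : X) : Set X :=
  γ '' Set.Icc 0 (dist a b)

/-- `X` is `δ`-hyperbolic: every geodesic triangle is `δ`-slim, i.e. each side is
contained in the `δ`-neighbourhood of the union of the other two sides. -/
def DeltaHyp (X : Type*) [MetricSpace X] (δ : ℝ) : Prop :=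
  ∀ (a b c : X) (γ₁ γ₂ γ₃ : ℝ → X),
    IsGeodesicFrom γ₁ a b → IsGeodesicFrom γ₂ b c → IsGeodesicFrom γ₃ a c →
      ∀ x ∈ geodImage γ₃ a c,
        Metric.infDist x (geodImage γ₁ a b ∪ geodImage γ₂ b c) ≤ δ

/-- `U` is a `K`-quasiconvex subset: every geodesic joining two points of `U`
lies in the (closed) `K`-neighbourhood of `U`. -/
def QuasiconvexSet {X : Type*} [MetricSpace X] (K : ℝ) (U : Set X) : Prop :=
  ∀ a ∈ U, ∀ b ∈ U, ∀ γ : ℝ → X, IsGeodesicFrom γ a b →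
    ∀ x ∈ geodImage γ a b, Metric.infDist x U ≤ K

/-- `u` is a nearest point projection of `x` on `U`. -/
def IsNPProj {X : Type*} [MetricSpace X] (x : X) (U : Set X) (u : X) : Prop :=
  u ∈ U ∧ ∀ u' ∈ U, dist x u ≤ dist x u'

/-- The set of all nearest point projections of points of `V` onto `U`
(denoted `P_U(V)` in the paper). -/
def projSet {X : Type*} [MetricSpace X] (U V : Set X) : Set X :=
  {u | ∃ v ∈ V, IsNPProj v U u}

/-!
A geodesic from `z` to a point of the quasiconvex set `U` passes near the projection `P z`
(a thin-triangle argument). Hence `P` is coarsely Lipschitz, and points of a geodesic `[x, y]`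
project close to `[P x, P y]`.

By the Morse lemma `α` is Hausdorff-close to `[x, y]`, so every point of `P ∘ α` is close to
`[P x, P y]`. The Morse lemma is proved for quasi-geodesics that need not be continuous: around
a point of `[x, y]` at maximal distance `R` from `α`, a chain of `O(R)` points through `α`
avoids the `(R - 1)`-ball about it, while bisecting the chain in slim triangles puts a chain
point within `δ log₂ R + O(1)` of it; so `R` is bounded.

Conversely, sampling `P ∘ α` gives a chain from `P x` to `P y` with bounded steps lying near
`[P x, P y]`, and such a chain comes close to every point of that geodesic.
-/

section

open Real

variable {X : Type*} [MetricSpace X]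

namespace IsGeodesicFrom

variable {γ : ℝ → X} {a b : X}

lemma dist_eq (h : IsGeodesicFrom γ a b) {s t : ℝ} (hs : s ∈ Icc 0 (dist a b))
    (ht : t ∈ Icc 0 (dist a b)) : dist (γ s) (γ t) = |s - t| :=
  h.2.2 s hs t ht

lemma start_mem (h : IsGeodesicFrom γ a b) : a ∈ geodImage γ a b :=
  ⟨0, ⟨le_rfl, dist_nonneg⟩, h.1⟩

lemma end_mem (h : IsGeodesicFrom γ a b) : b ∈ geodImage γ a b :=
  ⟨dist a b, ⟨dist_nonneg, le_rfl⟩, h.2.1⟩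

lemma dist_start (h : IsGeodesicFrom γ a b) {s : ℝ} (hs : s ∈ Icc 0 (dist a b)) :
    dist a (γ s) = s := by
  conv_lhs => rw [← h.1]
  rw [h.dist_eq ⟨le_rfl, dist_nonneg⟩ hs, zero_sub, abs_neg, abs_of_nonneg hs.1]

lemma dist_end (h : IsGeodesicFrom γ a b) {s : ℝ} (hs : s ∈ Icc 0 (dist a b)) :
    dist (γ s) b = dist a b - s := by
  conv_lhs => rw [← h.2.1]
  rw [h.dist_eq hs ⟨dist_nonneg, le_rfl⟩, abs_sub_comm, abs_of_nonneg (sub_nonneg.2 hs.2)]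

lemma dist_add_dist_of_mem (h : IsGeodesicFrom γ a b) {w : X} (hw : w ∈ geodImage γ a b) :
    dist a w + dist w b = dist a b := by
  obtain ⟨s, hs, rfl⟩ := hw
  rw [h.dist_start hs, h.dist_end hs]
  ring

lemma dist_start_le (h : IsGeodesicFrom γ a b) {w : X} (hw : w ∈ geodImage γ a b) :
    dist a w ≤ dist a b := by
  linarith [h.dist_add_dist_of_mem hw, dist_nonneg (x := w) (y := b)]

lemma dist_end_le (h : IsGeodesicFrom γ a b) {w : X} (hw : w ∈ geodImage γ a b) :
    dist w b ≤ dist a b := by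
  linarith [h.dist_add_dist_of_mem hw, dist_nonneg (x := a) (y := w)]

lemma lipschitzOnWith (h : IsGeodesicFrom γ a b) :
    LipschitzOnWith 1 γ (Icc 0 (dist a b)) :=
  LipschitzOnWith.of_dist_le_mul fun s hs t ht => by
    rw [h.dist_eq hs ht, NNReal.coe_one, one_mul, Real.dist_eq]

lemma isCompact_geodImage (h : IsGeodesicFrom γ a b) : IsCompact (geodImage γ a b) :=
  isCompact_Icc.image_of_continuousOn h.lipschitzOnWith.continuousOn

lemma exists_dist_eq_infDist (h : IsGeodesicFrom γ a b) (x : X) :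
    ∃ w ∈ geodImage γ a b, infDist x (geodImage γ a b) = dist x w :=
  h.isCompact_geodImage.exists_infDist_eq_dist ⟨a, h.start_mem⟩ x

lemma reverse (h : IsGeodesicFrom γ a b) :
    IsGeodesicFrom (fun t => γ (dist a b - t)) b a := by
  have hmem : ∀ s ∈ Icc 0 (dist b a), dist a b - s ∈ Icc 0 (dist a b) := fun s hs => by
    rw [dist_comm] at hs
    exact ⟨by linarith [hs.2], by linarith [hs.1]⟩
  refine ⟨by simpa using h.2.1, by simpa [dist_comm] using h.1, fun s hs t ht => ?_⟩
  rw [h.dist_eq (hmem s hs) (hmem t ht), abs_sub_comm]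
  ring_nf

lemma restrict (h : IsGeodesicFrom γ a b) {r₁ r₂ : ℝ} (h₁ : r₁ ∈ Icc 0 (dist a b))
    (h₂ : r₂ ∈ Icc 0 (dist a b)) (hle : r₁ ≤ r₂) :
    IsGeodesicFrom (fun u => γ (r₁ + u)) (γ r₁) (γ r₂) := by
  have hd : dist (γ r₁) (γ r₂) = r₂ - r₁ := by
    rw [h.dist_eq h₁ h₂, abs_sub_comm, abs_of_nonneg (sub_nonneg.2 hle)]
  refine ⟨by simp, by simp [hd], fun s hs t ht => ?_⟩
  rw [hd] at hs ht
  rw [h.dist_eq ⟨by linarith [hs.1, h₁.1], by linarith [hs.2, h₂.2]⟩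
    ⟨by linarith [ht.1, h₁.1], by linarith [ht.2, h₂.2]⟩, add_sub_add_left_eq_sub]

end IsGeodesicFrom

lemma isGeodesicFrom_const (x : X) : IsGeodesicFrom (fun _ => x) x x := by
  refine ⟨rfl, rfl, fun s hs t ht => ?_⟩
  rw [dist_self, Icc_self, mem_singleton_iff] at hs ht
  simp [hs, ht]

lemma DeltaHyp.nonneg {δ : ℝ} (hX : DeltaHyp X δ) (x : X) : 0 ≤ δ :=
  infDist_nonneg.trans <| hX x x x _ _ _ (isGeodesicFrom_const x) (isGeodesicFrom_const x)
    (isGeodesicFrom_const x) x (isGeodesicFrom_const x).start_mem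

lemma QuasiconvexSet.nonneg {K : ℝ} {U : Set X} (hU : QuasiconvexSet K U) {u : X}
    (hu : u ∈ U) : 0 ≤ K :=
  infDist_nonneg.trans <| hU u hu u hu _ (isGeodesicFrom_const u) u
    (isGeodesicFrom_const u).start_mem

lemma infDist_union_eq_min {s t : Set X} (hs : s.Nonempty) (ht : t.Nonempty) (x : X) :
    infDist x (s ∪ t) = min (infDist x s) (infDist x t) := by
  simp only [infDist, infEDist_union]
  exact ENNReal.toReal_min (infEDist_ne_top hs) (infEDist_ne_top ht)

lemma IsGeodesicFrom.exists_infDist_eq_infDist {γ : ℝ → X} {a c : X}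
    (hγ : IsGeodesicFrom γ a c) {S₁ S₂ : Set X} (h₁ : a ∈ S₁) (h₂ : c ∈ S₂) :
    ∃ r ∈ Icc 0 (dist a c), infDist (γ r) S₁ = infDist (γ r) S₂ := by
  have hcont : ContinuousOn (fun r => infDist (γ r) S₁ - infDist (γ r) S₂) (Icc 0 (dist a c)) :=
    ((continuous_infDist_pt S₁).comp_continuousOn hγ.lipschitzOnWith.continuousOn).sub
      ((continuous_infDist_pt S₂).comp_continuousOn hγ.lipschitzOnWith.continuousOn)
  have hzero : (0 : ℝ) ∈ Icc (infDist (γ 0) S₁ - infDist (γ 0) S₂)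
      (infDist (γ (dist a c)) S₁ - infDist (γ (dist a c)) S₂) := by
    rw [hγ.1, hγ.2.1, infDist_zero_of_mem h₁, infDist_zero_of_mem h₂]
    exact ⟨by linarith [infDist_nonneg (x := a) (s := S₂)],
      by linarith [infDist_nonneg (x := c) (s := S₁)]⟩
  obtain ⟨r, hr, hr0⟩ := intermediate_value_Icc dist_nonneg hcont hzero
  exact ⟨r, hr, sub_eq_zero.1 hr0⟩

namespace DeltaHyp

variable {δ : ℝ} {a b c : X} {γ₁ γ₂ γ₃ : ℝ → X}

lemma exists_dist_le (hX : DeltaHyp X δ) (h₁ : IsGeodesicFrom γ₁ a b)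
    (h₂ : IsGeodesicFrom γ₂ b c) (h₃ : IsGeodesicFrom γ₃ a c) {x : X}
    (hx : x ∈ geodImage γ₃ a c) :
    ∃ w ∈ geodImage γ₁ a b ∪ geodImage γ₂ b c, dist x w ≤ δ := by
  obtain ⟨w, hw, hxw⟩ := (h₁.isCompact_geodImage.union
    h₂.isCompact_geodImage).exists_infDist_eq_dist ⟨a, Or.inl h₁.start_mem⟩ x
  exact ⟨w, hw, hxw ▸ hX a b c γ₁ γ₂ γ₃ h₁ h₂ h₃ x hx⟩

/-- Take the point of the third side equidistant from the other two sides. -/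
lemma exists_near_both_sides (hX : DeltaHyp X δ) (h₁ : IsGeodesicFrom γ₁ a b)
    (h₂ : IsGeodesicFrom γ₂ b c) (h₃ : IsGeodesicFrom γ₃ a c) :
    ∃ m ∈ geodImage γ₃ a c, (∃ p ∈ geodImage γ₁ a b, dist m p ≤ δ) ∧
      ∃ q ∈ geodImage γ₂ b c, dist m q ≤ δ := by
  obtain ⟨r, hr, heq⟩ := h₃.exists_infDist_eq_infDist h₁.start_mem h₂.end_mem
  have hslim := hX a b c γ₁ γ₂ γ₃ h₁ h₂ h₃ (γ₃ r) ⟨r, hr, rfl⟩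
  rw [infDist_union_eq_min ⟨a, h₁.start_mem⟩ ⟨b, h₂.start_mem⟩, ← heq, min_self] at hslim
  obtain ⟨p, hp, hdp⟩ := h₁.exists_dist_eq_infDist (γ₃ r)
  obtain ⟨q, hq, hdq⟩ := h₂.exists_dist_eq_infDist (γ₃ r)
  exact ⟨γ₃ r, ⟨r, hr, rfl⟩, ⟨p, hp, hdp ▸ hslim⟩, ⟨q, hq, hdq ▸ heq ▸ hslim⟩⟩

end DeltaHyp

lemma IsNPProj.dist_eq_infDist {U : Set X} {z u : X} (h : IsNPProj z U u) :
    dist z u = infDist z U :=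
  le_antisymm ((le_infDist ⟨u, h.1⟩).2 h.2) (infDist_le_dist_of_mem h.1)

section Projection

variable {δ K : ℝ} {U : Set X} {P : X → X}

lemma IsNPProj.dist_add_dist_le (hGeo : GeodesicMetricSpace X) (hX : DeltaHyp X δ)
    (hU : QuasiconvexSet K U) {z Pz u : X} (hPz : IsNPProj z U Pz) (hu : u ∈ U) :
    dist z Pz + dist Pz u ≤ dist z u + (4 * δ + 2 * K) := by
  obtain ⟨g₁, hg₁⟩ := hGeo z Pz
  obtain ⟨g₂, hg₂⟩ := hGeo Pz u
  obtain ⟨g₃, hg₃⟩ := hGeo z u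
  obtain ⟨m, hm, ⟨p, hp, hmp⟩, ⟨q, hq, hmq⟩⟩ := hX.exists_near_both_sides hg₁ hg₂ hg₃
  have hqU : dist z Pz ≤ dist z q + K := by
    rw [hPz.dist_eq_infDist]
    linarith [infDist_le_infDist_add_dist (x := z) (y := q) (s := U),
      hU Pz hPz.1 u hu g₂ hg₂ q hq, dist_comm z q]
  linarith [hg₁.dist_add_dist_of_mem hp, hg₃.dist_add_dist_of_mem hm, dist_triangle z m q,
    dist_triangle z p m, dist_triangle4 Pz p m u, dist_comm p m, dist_comm Pz p]

lemma IsNPProj.dist_add_dist_le_of_infDist (hGeo : GeodesicMetricSpace X) (hX : DeltaHyp X δ)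
    (hU : QuasiconvexSet K U) {z Pz : X} (hPz : IsNPProj z U Pz) (w : X) :
    dist z Pz + dist Pz w ≤ dist z w + 2 * infDist w U + (4 * δ + 2 * K) := by
  have key : (dist z Pz + dist Pz w - dist z w - (4 * δ + 2 * K)) / 2 ≤ infDist w U := by
    refine (le_infDist ⟨Pz, hPz.1⟩).2 fun u hu => ?_
    linarith [hPz.dist_add_dist_le hGeo hX hU hu, dist_triangle Pz u w, dist_triangle z w u,
      dist_comm u w]
  linarith

lemma dist_proj_le (hGeo : GeodesicMetricSpace X) (hX : DeltaHyp X δ)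
    (hU : QuasiconvexSet K U) (hP : ∀ z, IsNPProj z U (P z)) (z w : X) :
    dist (P z) (P w) ≤ 2 * dist z w + (4 * δ + 2 * K) := by
  linarith [(hP z).dist_add_dist_le hGeo hX hU (hP w).1, dist_triangle z w (P w),
    (hP w).2 (P z) (hP z).1, dist_triangle w z (P z), dist_comm w z]

lemma dist_proj_le_of_dist_add_dist_eq (hGeo : GeodesicMetricSpace X) (hX : DeltaHyp X δ)
    (hU : QuasiconvexSet K U) (hP : ∀ z, IsNPProj z U (P z)) {z w : X}
    (hw : dist z w + dist w (P z) = dist z (P z)) (z' : X) :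
    dist (P z) (P z') ≤ 2 * dist z' w + (4 * δ + 2 * K) := by
  linarith [(hP z).dist_add_dist_le hGeo hX hU (hP z').1, dist_triangle4 z w z' (P z'),
    (hP z').2 (P z) (hP z).1, dist_triangle z' w (P z), dist_comm w z']

lemma infDist_proj_geodImage_le (hGeo : GeodesicMetricSpace X) (hX : DeltaHyp X δ)
    (hU : QuasiconvexSet K U) (hP : ∀ z, IsNPProj z U (P z)) {x y : X} {lam γ : ℝ → X}
    (hlam : IsGeodesicFrom lam x y) (hγ : IsGeodesicFrom γ (P x) (P y)) {z : X}
    (hz : z ∈ geodImage lam x y) :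
    infDist (P z) (geodImage γ (P x) (P y)) ≤ 8 * δ + 4 * K := by
  obtain ⟨g₁, hg₁⟩ := hGeo x (P y)
  obtain ⟨g₂, hg₂⟩ := hGeo (P y) y
  obtain ⟨g₃, hg₃⟩ := hGeo x (P x)
  have hδ := hX.nonneg x
  have hK := hU.nonneg (hP x).1
  obtain ⟨w₁, hw₁ | hw₁, hzw₁⟩ := hX.exists_dist_le hg₁ hg₂ hlam hz
  · obtain ⟨w₂, hw₂ | hw₂, hw₁₂⟩ := hX.exists_dist_le hg₃ hγ hg₁ hw₁
    · have := dist_proj_le_of_dist_add_dist_eq hGeo hX hU hP (hg₃.dist_add_dist_of_mem hw₂) z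
      linarith [infDist_le_dist_of_mem (x := P z) hγ.start_mem, dist_comm (P z) (P x),
        dist_triangle z w₁ w₂]
    · have := (hP z).dist_add_dist_le_of_infDist hGeo hX hU w₂
      linarith [infDist_le_dist_of_mem (x := P z) hw₂, dist_triangle z w₁ w₂,
        hU (P x) (hP x).1 (P y) (hP y).1 γ hγ w₂ hw₂, dist_nonneg (x := z) (y := P z)]
  · have hbetween : dist y w₁ + dist w₁ (P y) = dist y (P y) := by
      linarith [hg₂.dist_add_dist_of_mem hw₁, dist_comm y w₁, dist_comm w₁ (P y), dist_comm y (P y)]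
    have := dist_proj_le_of_dist_add_dist_eq hGeo hX hU hP hbetween z
    linarith [infDist_le_dist_of_mem (x := P z) hγ.end_mem, dist_comm (P z) (P y)]

end Projection

def IsCoarseChain (c : ℝ) (p : ℕ → X) (N : ℕ) : Prop :=
  ∀ i < N, dist (p i) (p (i + 1)) ≤ c

namespace IsCoarseChain

variable {c : ℝ} {p q : ℕ → X} {N M : ℕ}

lemma mono (hp : IsCoarseChain c p N) {c' : ℝ} (hc : c ≤ c') : IsCoarseChain c' p N :=
  fun i hi => (hp i hi).trans hc

lemma drop (hp : IsCoarseChain c p N) (M : ℕ) : IsCoarseChain c (fun j => p (M + j)) (N - M) :=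
  fun j hj => hp (M + j) (by omega)

lemma append (hp : IsCoarseChain c p N) (hq : IsCoarseChain c q M) (hpq : p N = q 0) :
    ∃ r : ℕ → X, r 0 = p 0 ∧ r (N + M) = q M ∧ IsCoarseChain c r (N + M) ∧
      r '' Iic (N + M) ⊆ p '' Iic N ∪ q '' Iic M := by
  refine ⟨fun j => if j ≤ N then p j else q (j - N), by simp, ?_, fun j hj => ?_, ?_⟩
  · rcases Nat.eq_zero_or_pos M with rfl | hM
    · simp [hpq]
    · simp [show ¬N + M ≤ N by omega]
  · by_cases hjN : j < N
    · simpa [hjN.le, Nat.succ_le_of_lt hjN] using hp j hjN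
    · have := hq (j - N) (by omega)
      rcases (not_lt.1 hjN).eq_or_lt with rfl | hlt
      · simpa [hpq] using this
      · simpa [hlt.not_ge, show ¬j + 1 ≤ N by omega, show j + 1 - N = j - N + 1 by omega]
          using this
  · rintro _ ⟨j, hj, rfl⟩
    by_cases hjN : j ≤ N
    · exact Or.inl ⟨j, hjN, by simp [hjN]⟩
    · exact Or.inr ⟨j - N, by simp only [mem_Iic] at hj ⊢; omega, by simp [hjN]⟩

end IsCoarseChain

def IsCoarseLipschitzOn (L c : ℝ) (f : ℝ → X) (S : Set ℝ) : Prop :=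
  ∀ s ∈ S, ∀ t ∈ S, dist (f s) (f t) ≤ L * |s - t| + c

lemma IsCoarseLipschitzOn.mono {L c : ℝ} {f : ℝ → X} {S T : Set ℝ}
    (hf : IsCoarseLipschitzOn L c f S) (hT : T ⊆ S) : IsCoarseLipschitzOn L c f T :=
  fun s hs t ht => hf s (hT hs) t (hT ht)

lemma IsGeodesicFrom.isCoarseLipschitzOn {γ : ℝ → X} {a b : X} (h : IsGeodesicFrom γ a b) :
    IsCoarseLipschitzOn 1 0 γ (Icc 0 (dist a b)) :=
  fun s hs t ht => by rw [h.dist_eq hs ht]; simp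

lemma IsCoarseLipschitzOn.exists_isCoarseChain {L c : ℝ} {f : ℝ → X} {s₁ s₂ : ℝ}
    (hf : IsCoarseLipschitzOn L c f (uIcc s₁ s₂)) (hL : 0 ≤ L) :
    ∃ p : ℕ → X, p 0 = f s₁ ∧ p ⌈|s₂ - s₁|⌉₊ = f s₂ ∧
      IsCoarseChain (L + c) p ⌈|s₂ - s₁|⌉₊ ∧ p '' Iic ⌈|s₂ - s₁|⌉₊ ⊆ f '' uIcc s₁ s₂ := by
  set n := ⌈|s₂ - s₁|⌉₊
  set h := (s₂ - s₁) / n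
  have hh : |h| ≤ 1 := by
    rw [abs_div, Nat.abs_cast]
    exact div_le_one_of_le₀ (Nat.le_ceil _) n.cast_nonneg
  have hend : s₁ + n * h = s₂ := by
    rcases Nat.eq_zero_or_pos n with hn | hn
    · have := Nat.le_ceil |s₂ - s₁|
      rw [show ⌈|s₂ - s₁|⌉₊ = n from rfl, hn, Nat.cast_zero, abs_nonpos_iff, sub_eq_zero] at this
      simp [hn, this]
    · simp only [h]
      field_simp
      ring
  have hmem : ∀ j ≤ n, s₁ + j * h ∈ uIcc s₁ s₂ := fun j hj => by
    have hθ : s₁ + j * h = s₁ + (j / n : ℝ) * (s₂ - s₁) := by simp only [h]; ring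
    have hθ₀ : (0 : ℝ) ≤ j / n := by positivity
    have hθ₁ : (j / n : ℝ) ≤ 1 := div_le_one_of_le₀ (by exact_mod_cast hj) n.cast_nonneg
    rw [hθ, mem_uIcc]
    rcases le_total s₁ s₂ with hs | hs
    · exact Or.inl ⟨by nlinarith, by nlinarith⟩
    · exact Or.inr ⟨by nlinarith, by nlinarith⟩
  refine ⟨fun j => f (s₁ + j * h), by simp, by simp [hend], fun j hj => ?_, ?_⟩
  · have hstep := hf _ (hmem j hj.le) _ (hmem (j + 1) hj)
    rw [show s₁ + j * h - (s₁ + ((j + 1 : ℕ) : ℝ) * h) = -h by push_cast; ring, abs_neg] at hstep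
    nlinarith
  · rintro _ ⟨j, hj, rfl⟩
    exact ⟨_, hmem j hj, rfl⟩

namespace DeltaHyp

variable {δ c : ℝ}

/-- Bisecting the chain and using slim triangles costs `δ` per level. -/
lemma exists_dist_le_of_isCoarseChain_of_le_two_pow (hGeo : GeodesicMetricSpace X)
    (hX : DeltaHyp X δ) (hc : 0 ≤ c) (d : ℕ) {N : ℕ} (hN : N ≤ 2 ^ d) {p : ℕ → X}
    (hp : IsCoarseChain c p N) {γ : ℝ → X} (hγ : IsGeodesicFrom γ (p 0) (p N)) {m : X}
    (hm : m ∈ geodImage γ (p 0) (p N)) : ∃ i ≤ N, dist m (p i) ≤ δ * d + c := by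
  induction d generalizing N p γ m with
  | zero =>
    refine ⟨0, N.zero_le, ?_⟩
    have hpN : dist (p 0) (p N) ≤ c := by
      interval_cases N
      · simpa using hc
      · simpa using hp 0 one_pos
    simpa [dist_comm] using (hγ.dist_start_le hm).trans hpN
  | succ d ih =>
    set M := min N (2 ^ d)
    obtain ⟨g₁, hg₁⟩ := hGeo (p 0) (p M)
    obtain ⟨g₂, hg₂⟩ := hGeo (p M) (p N)
    obtain ⟨w, hw | hw, hmw⟩ := hX.exists_dist_le hg₁ hg₂ hγ hm
    · obtain ⟨i, hi, hwi⟩ := ih (min_le_right _ _) (fun i hi => hp i (by omega)) hg₁ hw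
      exact ⟨i, by omega, by push_cast; linarith [dist_triangle m w (p i)]⟩
    · have hNM : M + (N - M) = N := by omega
      have hg₂' : IsGeodesicFrom g₂ (p (M + 0)) (p (M + (N - M))) := by rwa [hNM]
      obtain ⟨i, hi, hwi⟩ := ih (by rw [pow_succ] at hN; omega) (hp.drop M) hg₂'
        (by rwa [hNM, add_zero])
      exact ⟨M + i, by omega, by push_cast; linarith [dist_triangle m w (p (M + i))]⟩

lemma exists_dist_le_of_isCoarseChain (hGeo : GeodesicMetricSpace X) (hX : DeltaHyp X δ)
    (hc : 0 ≤ c) {N : ℕ} {p : ℕ → X} (hp : IsCoarseChain c p N) {γ : ℝ → X}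
    (hγ : IsGeodesicFrom γ (p 0) (p N)) {m : X} (hm : m ∈ geodImage γ (p 0) (p N)) :
    ∃ i ≤ N, dist m (p i) ≤ δ * (logb 2 N + 1) + c := by
  obtain ⟨i, hi, hmi⟩ := hX.exists_dist_le_of_isCoarseChain_of_le_two_pow hGeo hc
    (Nat.log 2 N + 1) (Nat.lt_pow_succ_log_self one_lt_two N).le hp hγ hm
  refine ⟨i, hi, hmi.trans ?_⟩
  push_cast
  gcongr
  · exact hX.nonneg m
  · exact natLog_le_logb N 2

end DeltaHyp

lemma exists_le_le_add_of_forall_sub_le {u : ℕ → ℝ} {c : ℝ} (hc : 0 ≤ c) {N : ℕ}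
    (hu : ∀ i < N, u (i + 1) - u i ≤ c) {r : ℝ} (h₀ : u 0 ≤ r) (hN : r ≤ u N) :
    ∃ i ≤ N, u i ≤ r ∧ r ≤ u i + c := by
  induction N with
  | zero => exact ⟨0, le_rfl, h₀, by linarith⟩
  | succ N ih =>
    by_cases hr : r ≤ u N
    · obtain ⟨i, hi, h⟩ := ih (fun i hi => hu i (by omega)) hr
      exact ⟨i, by omega, h⟩
    · exact ⟨N, by omega, by linarith, by linarith [hu N (by omega)]⟩

/-- Parameters of points of `γ` nearest to consecutive chain points differ by at most
`2 * D + c`, so they leave no longer gap in `[0, dist (p 0) (p N)]`. -/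
lemma IsGeodesicFrom.exists_dist_le_of_isCoarseChain {γ : ℝ → X} {p : ℕ → X} {N : ℕ}
    {c D : ℝ} (hc : 0 ≤ c) (hγ : IsGeodesicFrom γ (p 0) (p N)) (hp : IsCoarseChain c p N)
    (hD : ∀ i ≤ N, infDist (p i) (geodImage γ (p 0) (p N)) ≤ D) {r : ℝ}
    (hr : r ∈ Icc 0 (dist (p 0) (p N))) : ∃ i ≤ N, dist (γ r) (p i) ≤ 3 * D + c := by
  choose w hw hpw using fun i => hγ.exists_dist_eq_infDist (p i)
  choose ρ hρ hρw using hw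
  have hρD : ∀ i ≤ N, dist (p i) (γ (ρ i)) ≤ D := fun i hi => hρw i ▸ hpw i ▸ hD i hi
  have hD₀ : 0 ≤ D := dist_nonneg.trans (hρD 0 N.zero_le)
  by_cases h₀ : r < ρ 0
  · refine ⟨0, N.zero_le, ?_⟩
    linarith [hγ.dist_start hr, hγ.dist_start (hρ 0), hρD 0 N.zero_le, dist_comm (γ r) (p 0)]
  by_cases hN : ρ N < r
  · refine ⟨N, le_rfl, ?_⟩
    linarith [hγ.dist_end hr, hγ.dist_end (hρ N), hρD N le_rfl, dist_comm (p N) (γ (ρ N))]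
  have hstep : ∀ i < N, ρ (i + 1) - ρ i ≤ 2 * D + c := fun i hi => by
    have := hγ.dist_eq (hρ (i + 1)) (hρ i)
    linarith [le_abs_self (ρ (i + 1) - ρ i), dist_triangle4 (γ (ρ (i + 1))) (p (i + 1)) (p i)
      (γ (ρ i)), hρD i hi.le, hρD (i + 1) hi, hp i hi, dist_comm (p i) (p (i + 1)),
      dist_comm (p (i + 1)) (γ (ρ (i + 1)))]
  obtain ⟨i, hi, hρi, hrρ⟩ := exists_le_le_add_of_forall_sub_le (by linarith) hstep
    (not_lt.1 h₀) (not_lt.1 hN)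
  refine ⟨i, hi, ?_⟩
  have := hγ.dist_eq hr (hρ i)
  rw [abs_of_nonneg (sub_nonneg.2 hρi)] at this
  linarith [dist_triangle (γ r) (γ (ρ i)) (p i), hρD i hi, dist_comm (p i) (γ (ρ i))]

lemma hausdorffDist_image_geodImage_le {f : ℝ → X} {L c T D : ℝ}
    (hf : IsCoarseLipschitzOn L c f (Icc 0 T)) (hL : 0 ≤ L) (hT : 0 ≤ T) {γ : ℝ → X}
    (hγ : IsGeodesicFrom γ (f 0) (f T))
    (hD : ∀ t ∈ Icc 0 T, infDist (f t) (geodImage γ (f 0) (f T)) ≤ D) :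
    hausdorffDist (f '' Icc 0 T) (geodImage γ (f 0) (f T)) ≤ 3 * D + (L + c) := by
  have h0T : (0 : ℝ) ∈ Icc 0 T := ⟨le_rfl, hT⟩
  have hc : 0 ≤ c := by simpa using hf 0 h0T 0 h0T
  have hD₀ : 0 ≤ D := infDist_nonneg.trans (hD 0 h0T)
  rw [← uIcc_of_le hT] at hf hD ⊢
  obtain ⟨p, hp₀, hpN, hp, hpf⟩ := hf.exists_isCoarseChain hL
  rw [← hp₀, ← hpN] at hγ hD ⊢
  refine hausdorffDist_le_of_infDist (by positivity) (fun _ ⟨t, ht, hft⟩ => hft ▸ ?_) ?_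
  · linarith [hD t ht]
  · rintro _ ⟨r, hr, rfl⟩
    obtain ⟨i, hi, hri⟩ := hγ.exists_dist_le_of_isCoarseChain (by positivity) hp
      (fun i hi => by obtain ⟨t, ht, hti⟩ := hpf ⟨i, hi, rfl⟩; exact hti ▸ hD t ht) hr
    exact (infDist_le_dist_of_mem (hpf ⟨i, hi, rfl⟩)).trans (by linarith)

def IsQuasiGeodesic (k : ℝ) (α : ℝ → X) (T : ℝ) : Prop :=
  ∀ s ∈ Icc (0 : ℝ) T, ∀ t ∈ Icc (0 : ℝ) T,
    |s - t| / k - k ≤ dist (α s) (α t) ∧ dist (α s) (α t) ≤ k * |s - t| + k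

namespace IsQuasiGeodesic

variable {k T : ℝ} {α : ℝ → X}

lemma isCoarseLipschitzOn (hα : IsQuasiGeodesic k α T) :
    IsCoarseLipschitzOn k k α (Icc 0 T) :=
  fun s hs t ht => (hα s hs t ht).2

lemma abs_sub_le (hα : IsQuasiGeodesic k α T) (hk : 0 < k) {s t : ℝ} (hs : s ∈ Icc 0 T)
    (ht : t ∈ Icc 0 T) : |s - t| ≤ k * dist (α s) (α t) + k ^ 2 := by
  have := (div_le_iff₀ hk).1 (sub_le_iff_le_add.1 (hα s hs t ht).1)
  linarith

end IsQuasiGeodesic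

namespace IsGeodesicFrom

variable {γ : ℝ → X} {x y : X} {A : Set X} {r : ℝ}

/-- The last inequality keeps every geodesic from `γ r'` to `b` outside the `(R - 1)`-ball
around `γ r`, where `R = infDist (γ r) A`. -/
lemma exists_bridge (hγ : IsGeodesicFrom γ x y) (hx : x ∈ A) (hr : r ∈ Icc 0 (dist x y))
    (hmax : ∀ r' ∈ Icc 0 r, infDist (γ r') A ≤ infDist (γ r) A) :
    ∃ r' ∈ Icc 0 r, r - r' ≤ 2 * infDist (γ r) A ∧ ∃ b ∈ A,
      dist (γ r') b ≤ infDist (γ r) A + 1 ∧ infDist (γ r) A - 1 ≤ r - r' - dist (γ r') b := by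
  set R := infDist (γ r) A
  have hR : 0 ≤ R := infDist_nonneg
  by_cases hrR : r ≤ 2 * R
  · refine ⟨0, ⟨le_rfl, hr.1⟩, by linarith, x, hx, by simp [hγ.1]; linarith, ?_⟩
    have := infDist_le_dist_of_mem (x := γ r) hx
    rw [dist_comm, hγ.dist_start hr] at this
    simp [hγ.1]
    linarith
  · have hr' : r - 2 * R ∈ Icc 0 (dist x y) := ⟨by linarith, by linarith [hr.2]⟩
    obtain ⟨b, hb, hdb⟩ := (infDist_lt_iff ⟨x, hx⟩).1
      ((hmax (r - 2 * R) ⟨by linarith, by linarith⟩).trans_lt (lt_add_one R))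
    exact ⟨r - 2 * R, ⟨by linarith, by linarith⟩, by linarith, b, hb, hdb.le, by linarith⟩

lemma exists_bridge_right (hγ : IsGeodesicFrom γ x y) (hy : y ∈ A)
    (hr : r ∈ Icc 0 (dist x y))
    (hmax : ∀ r' ∈ Icc r (dist x y), infDist (γ r') A ≤ infDist (γ r) A) :
    ∃ r' ∈ Icc r (dist x y), r' - r ≤ 2 * infDist (γ r) A ∧ ∃ b ∈ A,
      dist b (γ r') ≤ infDist (γ r) A + 1 ∧ infDist (γ r) A - 1 ≤ r' - r - dist b (γ r') := by
  have hrr : γ (dist x y - (dist x y - r)) = γ r := by rw [sub_sub_cancel]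
  obtain ⟨r', hr', hrr', b, hb, hdb, hfar⟩ := hγ.reverse.exists_bridge hy
    ⟨sub_nonneg.2 hr.2, by rw [dist_comm]; linarith [hr.1]⟩ fun r' hr' => by
      simpa only [hrr] using hmax _ ⟨by linarith [hr'.2], by linarith [hr'.1]⟩
  simp only [hrr] at hrr' hdb hfar
  exact ⟨dist x y - r', ⟨by linarith [hr'.2], by linarith [hr'.1]⟩, by linarith, b, hb,
    by rwa [dist_comm b], by rw [dist_comm b]; linarith⟩

end IsGeodesicFrom

lemma IsGeodesicFrom.exists_isCoarseChain {γ : ℝ → X} {a b : X} (hγ : IsGeodesicFrom γ a b) :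
    ∃ N : ℕ, ∃ p : ℕ → X, p 0 = a ∧ p N = b ∧ IsCoarseChain 1 p N ∧
      (N : ℝ) ≤ dist a b + 1 ∧ p '' Iic N ⊆ geodImage γ a b := by
  have hf := hγ.isCoarseLipschitzOn
  rw [← uIcc_of_le dist_nonneg] at hf
  obtain ⟨p, hp₀, hpN, hp, hpγ⟩ := hf.exists_isCoarseChain zero_le_one
  rw [sub_zero, abs_of_nonneg dist_nonneg, add_zero] at *
  refine ⟨_, p, hp₀.trans hγ.1, hpN.trans hγ.2.1, hp, (Nat.ceil_lt_add_one dist_nonneg).le, ?_⟩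
  rwa [uIcc_of_le dist_nonneg] at hpγ

lemma IsQuasiGeodesic.exists_isCoarseChain {k T : ℝ} {α : ℝ → X} (hα : IsQuasiGeodesic k α T)
    (hk : 1 ≤ k) {s₁ s₂ : ℝ} (hs₁ : s₁ ∈ Icc 0 T) (hs₂ : s₂ ∈ Icc 0 T) {a₁ a₂ : X}
    {g₁ g₂ : ℝ → X} (hg₁ : IsGeodesicFrom g₁ a₁ (α s₁)) (hg₂ : IsGeodesicFrom g₂ (α s₂) a₂) :
    ∃ N : ℕ, ∃ p : ℕ → X, p 0 = a₁ ∧ p N = a₂ ∧ IsCoarseChain (2 * k) p N ∧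
      (N : ℝ) ≤ dist a₁ (α s₁) + |s₂ - s₁| + dist (α s₂) a₂ + 3 ∧
      p '' Iic N ⊆ geodImage g₁ a₁ (α s₁) ∪ α '' Icc 0 T ∪ geodImage g₂ (α s₂) a₂ := by
  obtain ⟨N₁, p₁, hp₁₀, hp₁N, hp₁, hN₁, hp₁g⟩ := hg₁.exists_isCoarseChain
  obtain ⟨p₂, hp₂₀, hp₂N, hp₂, hp₂α⟩ :=
    (hα.isCoarseLipschitzOn.mono (uIcc_subset_Icc hs₁ hs₂)).exists_isCoarseChain (by linarith)
  obtain ⟨N₃, p₃, hp₃₀, hp₃N, hp₃, hN₃, hp₃g⟩ := hg₂.exists_isCoarseChain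
  obtain ⟨q, hq₀, hqN, hq, hqp⟩ :=
    (hp₁.mono (c' := 2 * k) (by linarith)).append (by rwa [two_mul]) (hp₁N.trans hp₂₀.symm)
  obtain ⟨p, hp₀, hpN, hp, hpq⟩ :=
    hq.append (hp₃.mono (by linarith)) (hqN.trans (hp₂N.trans hp₃₀.symm))
  refine ⟨_, p, hp₀.trans (hq₀.trans hp₁₀), hpN.trans hp₃N, hp, ?_, ?_⟩
  · push_cast
    linarith [Nat.ceil_lt_add_one (abs_nonneg (s₂ - s₁))]
  · refine hpq.trans (union_subset_union (hqp.trans (union_subset_union hp₁g ?_)) hp₃g)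
    exact hp₂α.trans (image_mono (uIcc_subset_Icc hs₁ hs₂))

lemma logb_natCast_le {N : ℕ} {x : ℝ} (hN : (N : ℝ) ≤ x) (hx : 1 ≤ x) : logb 2 N ≤ logb 2 x := by
  rcases N.eq_zero_or_pos with rfl | hN₀
  · rw [Nat.cast_zero, logb_zero]
    exact logb_nonneg one_lt_two hx
  · exact logb_le_logb_of_le one_lt_two (by exact_mod_cast hN₀) hN

/-- A chain through `α` joining the bridges of `exists_bridge` and `exists_bridge_right` avoids
the `(R - 1)`-ball around `γ r` and has `O(R)` points. -/
lemma DeltaHyp.infDist_le_logb_of_isMaxOn {δ k T : ℝ} {α : ℝ → X}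
    (hGeo : GeodesicMetricSpace X) (hX : DeltaHyp X δ) (hk : 1 ≤ k)
    (hα : IsQuasiGeodesic k α T) (hT : 0 ≤ T) {γ : ℝ → X}
    (hγ : IsGeodesicFrom γ (α 0) (α T)) {r : ℝ} (hr : r ∈ Icc 0 (dist (α 0) (α T)))
    (hmax : ∀ r' ∈ Icc 0 (dist (α 0) (α T)),
      infDist (γ r') (α '' Icc 0 T) ≤ infDist (γ r) (α '' Icc 0 T)) :
    infDist (γ r) (α '' Icc 0 T) ≤
      δ * (logb 2 ((k + 3) ^ 2 * (infDist (γ r) (α '' Icc 0 T) + 1)) + 1) + 2 * k + 1 := by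
  obtain ⟨r₁, hr₁, hr₁R, _, ⟨s₁, hs₁, rfl⟩, hd₁, hfar₁⟩ := hγ.exists_bridge
    (mem_image_of_mem α (left_mem_Icc.2 hT)) hr fun r' hr' => hmax r' ⟨hr'.1, hr'.2.trans hr.2⟩
  obtain ⟨r₂, hr₂, hr₂R, _, ⟨s₂, hs₂, rfl⟩, hd₂, hfar₂⟩ := hγ.exists_bridge_right
    (mem_image_of_mem α (right_mem_Icc.2 hT)) hr fun r' hr' => hmax r' ⟨hr.1.trans hr'.1, hr'.2⟩
  set R := infDist (γ r) (α '' Icc 0 T)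
  have hR : 0 ≤ R := infDist_nonneg
  obtain ⟨g₁, hg₁⟩ := hGeo (γ r₁) (α s₁)
  obtain ⟨g₂, hg₂⟩ := hGeo (α s₂) (γ r₂)
  obtain ⟨N, p, hp₀, hpN, hp, hN, hpS⟩ := hα.exists_isCoarseChain hk hs₁ hs₂ hg₁ hg₂
  have hr₁' : r₁ ∈ Icc 0 (dist (α 0) (α T)) := ⟨hr₁.1, hr₁.2.trans hr.2⟩
  have hr₂' : r₂ ∈ Icc 0 (dist (α 0) (α T)) := ⟨hr.1.trans hr₂.1, hr₂.2⟩
  have hd₁₂ := hγ.dist_eq hr₂' hr₁'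
  have hd₁r := hγ.dist_eq hr₁' hr
  have hd₂r := hγ.dist_eq hr hr₂'
  rw [abs_of_nonneg (by linarith [hr₁.2, hr₂.1])] at hd₁₂
  rw [abs_of_nonpos (by linarith [hr₁.2])] at hd₁r
  rw [abs_of_nonpos (by linarith [hr₂.1])] at hd₂r
  have hsub := hγ.restrict hr₁' hr₂' (hr₁.2.trans hr₂.1)
  rw [← hp₀, ← hpN] at hsub
  obtain ⟨i, hi, hpi⟩ := hX.exists_dist_le_of_isCoarseChain hGeo (by linarith) hp hsub
    (m := γ r) ⟨r - r₁, ⟨by linarith [hr₁.2], by rw [hp₀, hpN, dist_comm, hd₁₂]; linarith [hr₂.1]⟩,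
      by simp⟩
  have hfar : R - 1 ≤ dist (γ r) (p i) := by
    rcases hpS ⟨i, hi, rfl⟩ with (hw | hw) | hw
    · linarith [dist_triangle (γ r₁) (p i) (γ r), hg₁.dist_start_le hw, dist_comm (p i) (γ r)]
    · exact (infDist_le_dist_of_mem hw).trans' (by linarith)
    · linarith [dist_triangle (γ r) (p i) (γ r₂), hg₂.dist_end_le hw]
  have hs₁₂ := hα.abs_sub_le (by linarith) hs₂ hs₁
  have hα₁₂ : dist (α s₂) (α s₁) ≤ 6 * R + 2 := by
    linarith [dist_triangle4 (α s₂) (γ r₂) (γ r₁) (α s₁), dist_comm (α s₁) (γ r₁),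
      dist_comm (α s₂) (γ r₂)]
  have hNR : (N : ℝ) ≤ (k + 3) ^ 2 * (R + 1) := by
    nlinarith [mul_le_mul_of_nonneg_left hα₁₂ (by linarith : (0 : ℝ) ≤ k)]
  have hlog := logb_natCast_le hNR (by nlinarith)
  nlinarith [hX.nonneg (γ r)]

lemma le_of_le_mul_log_add_one {c e R : ℝ} (hc : 0 ≤ c) (hR : 0 ≤ R)
    (h : R ≤ c * log (R + 1) + e) : R ≤ 2 * (c * log (2 * c + 1) + e) + 1 := by
  have ht : 0 < 2 * c + 1 := by linarith
  have hlog : log (R + 1) ≤ (R + 1) / (2 * c + 1) - 1 + log (2 * c + 1) := by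
    have := log_le_sub_one_of_pos (div_pos (by linarith : (0 : ℝ) < R + 1) ht)
    rw [log_div (by linarith) ht.ne'] at this
    linarith
  have hfrac : c * ((R + 1) / (2 * c + 1)) ≤ (R + 1) / 2 := by
    rw [mul_div_assoc', div_le_div_iff₀ ht two_pos]
    nlinarith
  nlinarith [mul_le_mul_of_nonneg_left hlog hc]

/-- The solution bound of `R ≤ δ * (logb 2 ((k + 3) ^ 2 * (R + 1)) + 1) + 2 * k + 1` given by
`le_of_le_mul_log_add_one`. -/
noncomputable def morseRadius (δ k : ℝ) : ℝ :=
  2 * (δ * logb 2 ((k + 3) ^ 2 * (2 * (δ / log 2) + 1)) + δ + 2 * k + 1) + 1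

lemma le_morseRadius {δ k R : ℝ} (hδ : 0 ≤ δ) (hk : 0 ≤ k) (hR : 0 ≤ R)
    (h : R ≤ δ * (logb 2 ((k + 3) ^ 2 * (R + 1)) + 1) + 2 * k + 1) : R ≤ morseRadius δ k := by
  have hδlogb : ∀ x > 0,
      δ * logb 2 ((k + 3) ^ 2 * x) = δ / log 2 * log x + δ * logb 2 ((k + 3) ^ 2) := by
    intro x hx
    rw [logb_mul (by positivity) hx.ne', show logb 2 x = log x / log 2 from rfl]
    ring
  rw [mul_add, mul_one, hδlogb _ (by linarith)] at h
  have := le_of_le_mul_log_add_one (div_nonneg hδ (log_pos one_lt_two).le) hR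
    (e := δ * logb 2 ((k + 3) ^ 2) + δ + 2 * k + 1) (by linarith)
  rw [morseRadius, hδlogb _ (by positivity)]
  linarith

lemma DeltaHyp.infDist_le_morseRadius {δ k T : ℝ} {α : ℝ → X} (hGeo : GeodesicMetricSpace X)
    (hX : DeltaHyp X δ) (hk : 1 ≤ k) (hα : IsQuasiGeodesic k α T) (hT : 0 ≤ T) {γ : ℝ → X}
    (hγ : IsGeodesicFrom γ (α 0) (α T)) {w : X} (hw : w ∈ geodImage γ (α 0) (α T)) :
    infDist w (α '' Icc 0 T) ≤ morseRadius δ k := by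
  obtain ⟨r, hr, rfl⟩ := hw
  obtain ⟨r₀, hr₀, hmax⟩ := isCompact_Icc.exists_isMaxOn ⟨0, left_mem_Icc.2 dist_nonneg⟩
    ((continuous_infDist_pt (α '' Icc 0 T)).comp_continuousOn hγ.lipschitzOnWith.continuousOn)
  exact (hmax hr).trans <| le_morseRadius (hX.nonneg (α 0)) (by linarith) infDist_nonneg <|
    hX.infDist_le_logb_of_isMaxOn hGeo hk hα hT hγ hr₀ fun r' hr' => hmax hr'

/-- The point of `γ` equidistant from `α '' Icc 0 t` and `α '' Icc t T` is close to some
`α s₁` and `α s₂` with `s₁ ≤ t ≤ s₂`, and then `s₂ - s₁` is bounded. -/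
lemma IsQuasiGeodesic.infDist_le {k T D : ℝ} {α : ℝ → X} (hk : 1 ≤ k)
    (hα : IsQuasiGeodesic k α T) {γ : ℝ → X} (hγ : IsGeodesicFrom γ (α 0) (α T))
    (hD : ∀ w ∈ geodImage γ (α 0) (α T), infDist w (α '' Icc 0 T) ≤ D) {t : ℝ}
    (ht : t ∈ Icc 0 T) :
    infDist (α t) (geodImage γ (α 0) (α T)) ≤ (2 * k ^ 2 + 1) * (D + 1) + k ^ 3 + k := by
  have h₁ : α 0 ∈ α '' Icc 0 t := mem_image_of_mem α (left_mem_Icc.2 ht.1)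
  have h₂ : α T ∈ α '' Icc t T := mem_image_of_mem α (right_mem_Icc.2 ht.2)
  obtain ⟨r, hr, heq⟩ := hγ.exists_infDist_eq_infDist h₁ h₂
  have hD' := hD (γ r) ⟨r, hr, rfl⟩
  rw [← Icc_union_Icc_eq_Icc ht.1 ht.2, image_union, infDist_union_eq_min ⟨_, h₁⟩ ⟨_, h₂⟩,
    ← heq, min_self] at hD'
  obtain ⟨_, ⟨s₁, hs₁, rfl⟩, hd₁⟩ := (infDist_lt_iff ⟨_, h₁⟩).1 (hD'.trans_lt (lt_add_one D))
  obtain ⟨_, ⟨s₂, hs₂, rfl⟩, hd₂⟩ :=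
    (infDist_lt_iff ⟨_, h₂⟩).1 ((heq ▸ hD').trans_lt (lt_add_one D))
  have hs₁T : s₁ ∈ Icc 0 T := ⟨hs₁.1, hs₁.2.trans ht.2⟩
  have hs₂T : s₂ ∈ Icc 0 T := ⟨ht.1.trans hs₂.1, hs₂.2⟩
  have hs₁₂ := hα.abs_sub_le (by linarith) hs₂T hs₁T
  rw [abs_of_nonneg (by linarith [hs₁.2, hs₂.1])] at hs₁₂
  have hα₁₂ : dist (α s₂) (α s₁) ≤ 2 * (D + 1) := by
    linarith [dist_triangle (α s₂) (γ r) (α s₁), dist_comm (γ r) (α s₂)]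
  have hαt := hα.isCoarseLipschitzOn t ht s₁ hs₁T
  rw [abs_of_nonneg (by linarith [hs₁.2])] at hαt
  have hγr : γ r ∈ geodImage γ (α 0) (α T) := mem_image_of_mem γ hr
  nlinarith [infDist_le_dist_of_mem (x := α t) hγr, dist_triangle (α t) (α s₁) (γ r),
    dist_comm (γ r) (α s₁),
    mul_le_mul_of_nonneg_left hα₁₂ (by linarith : (0 : ℝ) ≤ k),
    mul_le_mul_of_nonneg_left (by linarith [hs₂.1] : t - s₁ ≤ s₂ - s₁) (by linarith : (0 : ℝ) ≤ k)]

section ProjectionOfQuasiGeodesic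

variable {δ K k T : ℝ} {U : Set X} {P : X → X}

lemma IsCoarseLipschitzOn.proj {L c : ℝ} {f : ℝ → X} {S : Set ℝ}
    (hf : IsCoarseLipschitzOn L c f S) (hGeo : GeodesicMetricSpace X) (hX : DeltaHyp X δ)
    (hU : QuasiconvexSet K U) (hP : ∀ z, IsNPProj z U (P z)) :
    IsCoarseLipschitzOn (2 * L) (2 * c + (4 * δ + 2 * K)) (fun t => P (f t)) S :=
  fun s hs t ht => by linarith [dist_proj_le hGeo hX hU hP (f s) (f t), hf s hs t ht]

lemma infDist_proj_quasiGeodesic_le (hGeo : GeodesicMetricSpace X) (hX : DeltaHyp X δ)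
    (hU : QuasiconvexSet K U) (hP : ∀ z, IsNPProj z U (P z)) {α : ℝ → X} (hk : 1 ≤ k)
    (hα : IsQuasiGeodesic k α T) (hT : 0 ≤ T) {γ : ℝ → X}
    (hγ : IsGeodesicFrom γ (P (α 0)) (P (α T))) {t : ℝ} (ht : t ∈ Icc 0 T) :
    infDist (P (α t)) (geodImage γ (P (α 0)) (P (α T))) ≤
      2 * ((2 * k ^ 2 + 1) * (morseRadius δ k + 1) + k ^ 3 + k) + (4 * δ + 2 * K) +
        (8 * δ + 4 * K) := by
  obtain ⟨lam, hlam⟩ := hGeo (α 0) (α T)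
  have hαt := hα.infDist_le hk hlam (fun w hw => hX.infDist_le_morseRadius hGeo hk hα hT hlam hw) ht
  obtain ⟨z, hz, hdz⟩ := hlam.exists_dist_eq_infDist (α t)
  rw [hdz] at hαt
  linarith [infDist_le_infDist_add_dist (x := P (α t)) (y := P z)
    (s := geodImage γ (P (α 0)) (P (α T))), infDist_proj_geodImage_le hGeo hX hU hP hlam hγ hz,
    dist_proj_le hGeo hX hU hP (α t) z]

end ProjectionOfQuasiGeodesic

end

theorem projection_of_quasigeodesic_close_to_geodesic_general (δ K k : ℝ)
    (hk : 1 ≤ k) :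
    ∃ D : ℝ, ∀ (X : Type*) [MetricSpace X],
      GeodesicMetricSpace X → DeltaHyp X δ →
      ∀ U : Set X, IsClosed U → QuasiconvexSet K U →
        ∀ P : X → X, (∀ z : X, IsNPProj z U (P z)) →
          ∀ (x y : X) (α : ℝ → X) (T : ℝ), 0 ≤ T →
            α 0 = x → α T = y →
            (∀ s ∈ Set.Icc (0 : ℝ) T, ∀ t ∈ Set.Icc (0 : ℝ) T,
              |s - t| / k - k ≤ dist (α s) (α t) ∧ dist (α s) (α t) ≤ k * |s - t| + k) →
            ∀ γ : ℝ → X, IsGeodesicFrom γ (P x) (P y) →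
              Metric.hausdorffDist (P '' (α '' Set.Icc 0 T))
                (geodImage γ (P x) (P y)) ≤ D := by
  refine ⟨3 * (2 * ((2 * k ^ 2 + 1) * (morseRadius δ k + 1) + k ^ 3 + k) + (4 * δ + 2 * K) +
    (8 * δ + 4 * K)) + (2 * k + (2 * k + (4 * δ + 2 * K))), ?_⟩
  intro X _ hGeo hX U _ hU P hP x y α T hT hx hy hα γ hγ
  subst hx hy
  rw [image_image]
  exact hausdorffDist_image_geodImage_le
    ((IsQuasiGeodesic.isCoarseLipschitzOn hα).proj hGeo hX hU hP)
    (by linarith) hT hγ fun t ht => infDist_proj_quasiGeodesic_le hGeo hX hU hP hk hα hT hγ ht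

/-- The nearest point projection of a `k`-quasi-geodesic onto a
closed `K`-quasiconvex subset `U` is uniformly Hausdorff-close to a geodesic
joining the projections of its endpoints. -/
theorem projection_of_quasigeodesic_close_to_geodesic (δ K k : ℝ)
    (hδ : 0 ≤ δ) (hK : 0 ≤ K) (hk : 1 ≤ k) :
    ∃ D : ℝ, ∀ (X : Type*) [MetricSpace X],
      GeodesicMetricSpace X → DeltaHyp X δ →
      ∀ U : Set X, IsClosed U → QuasiconvexSet K U →
        ∀ P : X → X, (∀ z : X, IsNPProj z U (P z)) →
          ∀ (x y : X) (α : ℝ → X) (T : ℝ), 0 ≤ T →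
            α 0 = x → α T = y →
            (∀ s ∈ Set.Icc (0 : ℝ) T, ∀ t ∈ Set.Icc (0 : ℝ) T,
              |s - t| / k - k ≤ dist (α s) (α t) ∧ dist (α s) (α t) ≤ k * |s - t| + k) →
            ∀ γ : ℝ → X, IsGeodesicFrom γ (P x) (P y) →
              Metric.hausdorffDist (P '' (α '' Set.Icc 0 T))
                (geodImage γ (P x) (P y)) ≤ D :=
  projection_of_quasigeodesic_close_to_geodesic_general δ K k hk
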